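/- (Cumulative-potential–elliptical-potential inequality) Let V be a real Hilbert space, λ > 0, and let g_1,…,g_T ∈ V. Define A_0 = λI, ζ_0 = 0, A_t = A_{t-1} + g_t ⊗ g_t, and ζ_t = ζ_{t-1} + g_t for t = 1,…,T, and the cumulative potential Φ_t = ⟨ζ_t, A_t^{-1} ζ_t⟩. If the sign condition ⟨g_t, A_{t-1}^{-1} ζ_{t-1}⟩ ≤ 0 holds for every t = 1,…,T (as it does for the iterates of CoRectron), then Φ_T ≤ Σ_{t=1}^T ⟨g_t, A_t^{-1} g_t⟩. -/

import Mathlib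

/-!
Write `B = A_{t-1}`, `C = A_t = B + a ⊗ a` with `a = g_t`, and `z = ζ_{t-1}`. Applying `B⁻¹` to
`z = C (C⁻¹ z)` gives the Sherman–Morrison relation `B⁻¹ z = C⁻¹ z + ⟪a, C⁻¹ z⟫ B⁻¹ a`, hence
`⟪a, C⁻¹ z⟫ (1 + ⟪a, B⁻¹ a⟫) = ⟪a, B⁻¹ z⟫` and `⟪z, B⁻¹ z⟫ = ⟪z, C⁻¹ z⟫ + ⟪a, C⁻¹ z⟫ ⟪a, B⁻¹ z⟫`.
Since `B ≥ 0`, the sign condition `⟪a, B⁻¹ z⟫ ≤ 0` forces `⟪a, C⁻¹ z⟫ ≤ 0`, so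
`Φ_t = ⟪z, C⁻¹ z⟫ + 2 ⟪a, C⁻¹ z⟫ + ⟪a, C⁻¹ a⟫ ≤ Φ_{t-1} + ⟪g_t, A_t⁻¹ g_t⟫`, and the claim follows
by summing. All `A_t` are invertible because `λ • 1 ≤ A_t` in the Loewner order.
-/

open scoped RealInnerProductSpace

/-- The rank-one operator `a ⊗ a : v ↦ ⟪a, v⟫ • a` on a real inner product space. -/
noncomputable def rankOne {V : Type*} [NormedAddCommGroup V] [InnerProductSpace ℝ V]
    (a : V) : V →L[ℝ] V :=
  (innerSL ℝ a).smulRight a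

open scoped Ring

section
variable {V : Type*} [NormedAddCommGroup V] [InnerProductSpace ℝ V]

lemma rankOne_apply (a v : V) : rankOne a v = ⟪a, v⟫ • a := rfl

lemma isPositive_rankOne (a : V) : (rankOne a).IsPositive :=
  InnerProductSpace.isPositive_rankOne_self a

lemma apply_inverse_apply {A : V →L[ℝ] V} (hA : IsUnit A) (v : V) : A (A⁻¹ʳ v) = v := by
  simpa using congr($(Ring.mul_inverse_cancel A hA) v)

lemma inverse_apply_apply {A : V →L[ℝ] V} (hA : IsUnit A) (v : V) : A⁻¹ʳ (A v) = v := by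
  simpa using congr($(Ring.inverse_mul_cancel A hA) v)

lemma isUnit_of_smul_one_le [CompleteSpace V] {lam : ℝ} (hlam : 0 < lam) {A : V →L[ℝ] V}
    (h : lam • 1 ≤ A) : IsUnit A := by
  refine A.isUnit_of_forall_le_norm_inner_map (c := ⟨lam, hlam.le⟩) hlam fun x => ?_
  have hx : 0 ≤ ⟪(A - lam • 1) x, x⟫ := h.re_inner_nonneg_left x
  calc ‖x‖ ^ 2 * lam = ⟪(lam • 1 : V →L[ℝ] V) x, x⟫ := by
        simp [real_inner_smul_left, mul_comm]
    _ ≤ ⟪A x, x⟫ := by simpa [inner_sub_left] using hx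
    _ ≤ ‖⟪A x, x⟫‖ := Real.le_norm_self _

lemma IsSelfAdjoint.inner_apply_comm [CompleteSpace V] {A : V →L[ℝ] V} (hA : IsSelfAdjoint A)
    (x y : V) : ⟪x, A y⟫ = ⟪y, A x⟫ :=
  (real_inner_comm _ _).trans (hA.isSymmetric y x)

variable {B : V →L[ℝ] V} {a : V}

lemma inverse_apply_eq_inverse_add_rankOne_apply (hB : IsUnit B) (hC : IsUnit (B + rankOne a))
    (z : V) :
    B⁻¹ʳ z = (B + rankOne a)⁻¹ʳ z + ⟪a, (B + rankOne a)⁻¹ʳ z⟫ • B⁻¹ʳ a := by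
  set u := (B + rankOne a)⁻¹ʳ z
  have hz : z = B u + ⟪a, u⟫ • a := by
    rw [← rankOne_apply, ← add_apply, apply_inverse_apply hC]
  rw [hz, map_add, inverse_apply_apply hB, map_smul]

lemma inner_inverse_add_rankOne_mul (hB : IsUnit B) (hC : IsUnit (B + rankOne a)) (z : V) :
    ⟪a, (B + rankOne a)⁻¹ʳ z⟫ * (1 + ⟪a, B⁻¹ʳ a⟫) = ⟪a, B⁻¹ʳ z⟫ := by
  rw [inverse_apply_eq_inverse_add_rankOne_apply hB hC z, inner_add_right,
    real_inner_smul_right]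
  ring

lemma inner_inverse_eq_inner_inverse_add_rankOne_add [CompleteSpace V] (hB : IsSelfAdjoint B)
    (hBu : IsUnit B) (hC : IsUnit (B + rankOne a)) (z : V) :
    ⟪z, B⁻¹ʳ z⟫ = ⟪z, (B + rankOne a)⁻¹ʳ z⟫ + ⟪a, (B + rankOne a)⁻¹ʳ z⟫ * ⟪a, B⁻¹ʳ z⟫ := by
  conv_lhs => rw [inverse_apply_eq_inverse_add_rankOne_apply hBu hC z, inner_add_right,
    real_inner_smul_right, hB.ringInverse.inner_apply_comm z a]

lemma inner_inverse_add_rankOne_add_le [CompleteSpace V] (hB : B.IsPositive) (hBu : IsUnit B)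
    (hC : IsUnit (B + rankOne a)) {z : V} (hsign : ⟪a, B⁻¹ʳ z⟫ ≤ 0) :
    ⟪z + a, (B + rankOne a)⁻¹ʳ (z + a)⟫ ≤ ⟪z, B⁻¹ʳ z⟫ + ⟪a, (B + rankOne a)⁻¹ʳ a⟫ := by
  set C := B + rankOne a
  have hBsa : IsSelfAdjoint B := hB.isSelfAdjoint
  have hCsa : IsSelfAdjoint C := (hB.add (isPositive_rankOne a)).isSelfAdjoint
  have hq : 0 ≤ ⟪a, B⁻¹ʳ a⟫ := by
    simpa [apply_inverse_apply hBu, real_inner_comm] using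
      hB.re_inner_nonneg_left (B⁻¹ʳ a)
  have hau : ⟪a, C⁻¹ʳ z⟫ ≤ 0 := by
    have := inner_inverse_add_rankOne_mul hBu hC z
    nlinarith
  have hexpand : ⟪z + a, C⁻¹ʳ (z + a)⟫ = ⟪z, C⁻¹ʳ z⟫ + 2 * ⟪a, C⁻¹ʳ z⟫ + ⟪a, C⁻¹ʳ a⟫ := by
    rw [map_add, inner_add_left, inner_add_right, inner_add_right,
      hCsa.ringInverse.inner_apply_comm z a]
    ring
  have := inner_inverse_eq_inner_inverse_add_rankOne_add hBsa hBu hC z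
  nlinarith

section Sequences

variable {lam : ℝ} {g : ℕ → V} {A : ℕ → V →L[ℝ] V} {ζ : ℕ → V}

lemma smul_one_le_of_forall_add_rankOne (h0 : lam • 1 ≤ A 0) {n : ℕ}
    (hA : ∀ t < n, A (t + 1) = A t + rankOne (g t)) : lam • 1 ≤ A n := by
  induction n with
  | zero => exact h0
  | succ n ih =>
    rw [hA n n.lt_succ_self, ContinuousLinearMap.le_def, add_sub_right_comm]
    exact (ih fun t ht => hA t (ht.trans n.lt_succ_self)).add
      (isPositive_rankOne (g n))

lemma inner_inverse_le_sum_of_inner_inverse_nonpos [CompleteSpace V] (hlam : 0 < lam)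
    (h0 : lam • 1 ≤ A 0) (hζ0 : ζ 0 = 0) {n : ℕ}
    (hA : ∀ t < n, A (t + 1) = A t + rankOne (g t)) (hζ : ∀ t < n, ζ (t + 1) = ζ t + g t)
    (hsign : ∀ t < n, ⟪g t, (A t)⁻¹ʳ (ζ t)⟫ ≤ 0) :
    ⟪ζ n, (A n)⁻¹ʳ (ζ n)⟫ ≤ ∑ t ∈ Finset.range n, ⟪g t, (A (t + 1))⁻¹ʳ (g t)⟫ := by
  induction n with
  | zero => simp [hζ0]
  | succ n ih =>
    have hlt := n.lt_succ_self
    have hA_le {m : ℕ} (hm : m ≤ n + 1) : lam • 1 ≤ A m :=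
      smul_one_le_of_forall_add_rankOne h0 fun t ht => hA t (ht.trans_le hm)
    have hpos : (A n).IsPositive := by
      have := (ContinuousLinearMap.isPositive_one.smul_of_nonneg hlam.le).add (hA_le hlt.le)
      rwa [add_sub_cancel] at this
    have hstep := inner_inverse_add_rankOne_add_le hpos
      (isUnit_of_smul_one_le hlam (hA_le hlt.le))
      (hA n hlt ▸ isUnit_of_smul_one_le hlam (hA_le le_rfl)) (hsign n hlt)
    rw [← hA n hlt, ← hζ n hlt] at hstep
    rw [Finset.sum_range_succ]
    linarith [ih (fun t ht => hA t (ht.trans hlt)) (fun t ht => hζ t (ht.trans hlt))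
      (fun t ht => hsign t (ht.trans hlt))]

end Sequences
end

/-- Cumulative-potential–elliptical-potential inequality: with `A_0 = λI`, `ζ_0 = 0`,
`A_t = A_{t-1} + g_t ⊗ g_t`, `ζ_t = ζ_{t-1} + g_t`, and the sign condition
`⟪g_t, A_{t-1}⁻¹ ζ_{t-1}⟫ ≤ 0` for all `t`, the cumulative potential satisfies
`Φ_T = ⟪ζ_T, A_T⁻¹ ζ_T⟫ ≤ Σ_t ⟪g_t, A_t⁻¹ g_t⟫`. -/
theorem corectron_cp_ep_inequality
    {V : Type*} [NormedAddCommGroup V] [InnerProductSpace ℝ V] [CompleteSpace V]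
    (T : ℕ) (lam : ℝ) (hlam : 0 < lam)
    (g : Fin T → V) (A : ℕ → (V →L[ℝ] V)) (ζ : ℕ → V)
    (hA0 : A 0 = lam • (1 : V →L[ℝ] V)) (hζ0 : ζ 0 = 0)
    (hA : ∀ t : Fin T, A ((t : ℕ) + 1) = A t + rankOne (g t))
    (hζ : ∀ t : Fin T, ζ ((t : ℕ) + 1) = ζ t + g t)
    (hsign : ∀ t : Fin T, ⟪g t, (Ring.inverse (A t)) (ζ t)⟫ ≤ 0) :
    ⟪ζ T, (Ring.inverse (A T)) (ζ T)⟫ ≤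
      ∑ t : Fin T, ⟪g t, (Ring.inverse (A ((t : ℕ) + 1))) (g t)⟫ := by
  set g' : ℕ → V := fun t => if h : t < T then g ⟨t, h⟩ else 0
  have hg' (t : Fin T) : g' t = g t := dif_pos t.isLt
  have key := inner_inverse_le_sum_of_inner_inverse_nonpos (g := g') hlam hA0.ge hζ0
    (fun t ht => hg' ⟨t, ht⟩ ▸ hA ⟨t, ht⟩) (fun t ht => hg' ⟨t, ht⟩ ▸ hζ ⟨t, ht⟩)
    (fun t ht => hg' ⟨t, ht⟩ ▸ hsign ⟨t, ht⟩)
  simpa only [← Fin.sum_univ_eq_sum_range, hg'] using key
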